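/- Let R : ℝ^n → ℝ be 1-strongly convex with respect to ‖·‖₁ on the probability simplex Δ_n, let ε > 0, and let u₁, …, u_T ∈ ℝ^n satisfy ‖u_t‖_∞ ≤ B for all t (with the convention u₀ = 0). Let w₁, …, w_T be the OFTRL iterates. Then for every 2 ≤ t ≤ T: ‖w_t − w_{t−1}‖₁ ≤ min{2, 3·ε·B}. -/

import Mathlib

/-- L1 norm: ‖x‖₁ = ∑ i, |x i|. -/
def l1 {n : ℕ} (x : Fin n → ℝ) : ℝ := ∑ i, |x i|

/-- L∞ norm: ‖x‖_∞ = max_i |x i|. -/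
noncomputable def linf {n : ℕ} [NeZero n] (x : Fin n → ℝ) : ℝ :=
  Finset.univ.sup' Finset.univ_nonempty (fun i => |x i|)

/-- Dot product ⟨x, y⟩ = ∑ i, x i · y i. -/
def dotn {n : ℕ} (x y : Fin n → ℝ) : ℝ := ∑ i, x i * y i

/-- R is 1-strongly convex with respect to ‖·‖₁ on the probability simplex Δ_n. -/
def StrongConvexOnSimplex {n : ℕ} (R : (Fin n → ℝ) → ℝ) : Prop :=
  ∀ w w' : Fin n → ℝ, w ∈ stdSimplex ℝ (Fin n) → w' ∈ stdSimplex ℝ (Fin n) →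
    ∀ t : ℝ, 0 ≤ t → t ≤ 1 →
      R (t • w + (1 - t) • w') ≤ t * R w + (1 - t) * R w'
        - (t * (1 - t) / 2) * (l1 (w - w')) ^ 2

/-- w₁, …, w_T are OFTRL iterates for utilities u (with u 0 = 0):
for each 1 ≤ t ≤ T, w t maximizes ⟨w, u_{t−1} + ∑_{τ=1}^{t−1} u_τ⟩ − R(w)/ε over Δ_n. -/
def OFTRL {n : ℕ} (R : (Fin n → ℝ) → ℝ) (ε : ℝ) (T : ℕ)
    (u : ℕ → Fin n → ℝ) (w : ℕ → Fin n → ℝ) : Prop :=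
  ∀ t : ℕ, 1 ≤ t → t ≤ T →
    w t ∈ stdSimplex ℝ (Fin n) ∧
    ∀ v ∈ stdSimplex ℝ (Fin n),
      dotn v (u (t - 1) + ∑ τ ∈ Finset.Icc 1 (t - 1), u τ) - R v / ε ≤
      dotn (w t) (u (t - 1) + ∑ τ ∈ Finset.Icc 1 (t - 1), u τ) - R (w t) / ε

lemma l1_nonneg' {n : ℕ} (x : Fin n → ℝ) : 0 ≤ l1 x :=
  Finset.sum_nonneg fun i _ => abs_nonneg _

lemma l1_sub_comm' {n : ℕ} (x y : Fin n → ℝ) : l1 (x - y) = l1 (y - x) := by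
  unfold l1; apply Finset.sum_congr rfl; intro i _
  simp [Pi.sub_apply, abs_sub_comm]

lemma hoelder' {n : ℕ} [NeZero n] (x y : Fin n → ℝ) : dotn x y ≤ l1 x * linf y := by
  unfold dotn l1
  rw [Finset.sum_mul]
  apply Finset.sum_le_sum
  intro i _
  calc x i * y i ≤ |x i * y i| := le_abs_self _
    _ = |x i| * |y i| := abs_mul _ _
    _ ≤ |x i| * linf y := by
        apply mul_le_mul_of_nonneg_left _ (abs_nonneg _)
        exact Finset.le_sup' (fun j => |y j|) (Finset.mem_univ i)

lemma dotn_mix' {n : ℕ} (t : ℝ) (v w g : Fin n → ℝ) :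
    dotn (t • v + (1 - t) • w) g = t * dotn v g + (1 - t) * dotn w g := by
  unfold dotn
  rw [Finset.mul_sum, Finset.mul_sum, ← Finset.sum_add_distrib]
  apply Finset.sum_congr rfl; intro i _
  simp only [Pi.add_apply, Pi.smul_apply, smul_eq_mul]; ring

lemma key' {n : ℕ} (R : (Fin n → ℝ) → ℝ) (hR : StrongConvexOnSimplex R)
    (ε : ℝ) (hε : 0 < ε) (g w v : Fin n → ℝ)
    (hws : w ∈ stdSimplex ℝ (Fin n)) (hvs : v ∈ stdSimplex ℝ (Fin n))
    (hmax : ∀ v' ∈ stdSimplex ℝ (Fin n), dotn v' g - R v' / ε ≤ dotn w g - R w / ε) :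
    l1 (v - w) ^ 2 / (2 * ε) ≤ (dotn w g - R w / ε) - (dotn v g - R v / ε) := by
  set D := (dotn w g - R w / ε) - (dotn v g - R v / ε) with hD
  have hD0 : 0 ≤ D := sub_nonneg.2 (hmax v hvs)
  set K := l1 (v - w) ^ 2 / (2 * ε) with hK
  have hK0 : 0 ≤ K := div_nonneg (sq_nonneg _) (by linarith)
  have step : ∀ t : ℝ, 0 < t → t ≤ 1 → (1 - t) * K ≤ D := by
    intro t ht0 ht1
    have hmix : t • v + (1 - t) • w ∈ stdSimplex ℝ (Fin n) :=
      (convex_stdSimplex ℝ (Fin n)) hvs hws (le_of_lt ht0) (by linarith) (by ring)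
    have h1 := hmax _ hmix
    have h2 := hR v w hvs hws t (le_of_lt ht0) ht1
    rw [dotn_mix'] at h1
    have h2' : R (t • v + (1 - t) • w) / ε ≤
        (t * R v + (1 - t) * R w - (t * (1 - t) / 2) * (l1 (v - w)) ^ 2) / ε :=
      (div_le_div_iff_of_pos_right hε).mpr h2
    have h2'' : R (t • v + (1 - t) • w) / ε ≤
        t * (R v / ε) + (1 - t) * (R w / ε)
          - (t * (1 - t) / 2) * ((l1 (v - w)) ^ 2 / ε) := by
      rw [show t * (R v / ε) + (1 - t) * (R w / ε)
          - (t * (1 - t) / 2) * ((l1 (v - w)) ^ 2 / ε)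
        = (t * R v + (1 - t) * R w - (t * (1 - t) / 2) * (l1 (v - w)) ^ 2) / ε by
          field_simp]
      exact h2'
    have h4 : t * ((1 - t) * K) ≤ t * D := by
      have hKk : K = (l1 (v - w)) ^ 2 / ε / 2 := by rw [hK]; ring
      rw [hKk, hD]
      nlinarith [h1, h2'']
    have := le_of_mul_le_mul_left h4 ht0
    linarith
  apply le_of_forall_pos_le_add
  intro η hη
  rcases eq_or_lt_of_le hK0 with h0 | hKpos
  · linarith
  · set t := min 1 (η / K) with ht
    have ht0 : 0 < t := lt_min one_pos (div_pos hη hKpos)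
    have ht1 : t ≤ 1 := min_le_left _ _
    have htK : t * K ≤ η := by
      have : t ≤ η / K := min_le_right _ _
      calc t * K ≤ (η / K) * K := by nlinarith
        _ = η := by field_simp
    have := step t ht0 ht1
    nlinarith

/-- stability of OFTRL iterates, ‖w_t − w_{t−1}‖₁ ≤ min{2, 3εB}. -/
theorem stmt_10 {n : ℕ} [NeZero n] (R : (Fin n → ℝ) → ℝ)
    (hR : StrongConvexOnSimplex R) (ε : ℝ) (hε : 0 < ε)
    (T : ℕ) (u : ℕ → Fin n → ℝ) (hu0 : u 0 = 0)
    (B : ℝ) (hB : ∀ t : ℕ, 1 ≤ t → t ≤ T → linf (u t) ≤ B)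
    (w : ℕ → Fin n → ℝ) (hw : OFTRL R ε T u w) :
    ∀ t : ℕ, 2 ≤ t → t ≤ T → l1 (w t - w (t - 1)) ≤ min 2 (3 * ε * B) := by
  intro t ht2 htT
  obtain ⟨s, rfl⟩ : ∃ s, t = s + 2 := ⟨t - 2, by omega⟩
  show l1 (w (s + 2) - w (s + 1)) ≤ min 2 (3 * ε * B)
  have hwt := hw (s + 2) (by omega) htT
  have hwt1 := hw (s + 1) (by omega) (by omega)
  obtain ⟨hwts, hwtmax⟩ := hwt
  obtain ⟨hwt1s, hwt1max⟩ := hwt1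
  -- B ≥ 0
  have hB1 : linf (u (s + 1)) ≤ B := hB (s + 1) (by omega) (by omega)
  have hlinf_nonneg : ∀ x : Fin n → ℝ, 0 ≤ linf x := by
    intro x
    unfold linf
    obtain ⟨i⟩ := Finset.univ_nonempty (α := Fin n)
    exact le_trans (abs_nonneg (x i)) (Finset.le_sup' (fun j => |x j|) (Finset.mem_univ i))
  have hB0 : 0 ≤ B := le_trans (hlinf_nonneg _) hB1
  -- bound by 2
  have hmem : ∀ x : Fin n → ℝ, x ∈ stdSimplex ℝ (Fin n) → l1 x = 1 := by
    intro x hx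
    unfold l1
    rw [← hx.2]
    exact Finset.sum_congr rfl fun i _ => abs_of_nonneg (hx.1 i)
  have hle2 : l1 (w (s + 2) - w (s + 1)) ≤ 2 := by
    have : l1 (w (s + 2) - w (s + 1)) ≤ l1 (w (s + 2)) + l1 (w (s + 1)) := by
      unfold l1
      rw [← Finset.sum_add_distrib]
      exact Finset.sum_le_sum fun i _ => abs_sub (w (s + 2) i) (w (s + 1) i)
    rw [hmem _ hwts, hmem _ hwt1s] at this
    linarith
  -- the two strong-concavity inequalities
  set g2 := u (s + 2 - 1) + ∑ τ ∈ Finset.Icc 1 (s + 2 - 1), u τ with hg2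
  set g1 := u (s + 1 - 1) + ∑ τ ∈ Finset.Icc 1 (s + 1 - 1), u τ with hg1
  have k1 := key' R hR ε hε g2 (w (s + 2)) (w (s + 1)) hwts hwt1s hwtmax
  have k2 := key' R hR ε hε g1 (w (s + 1)) (w (s + 2)) hwt1s hwts hwt1max
  set Δ := l1 (w (s + 2) - w (s + 1)) with hΔ
  have hΔ0 : 0 ≤ Δ := l1_nonneg' _
  have hΔsym : l1 (w (s + 1) - w (s + 2)) = Δ := l1_sub_comm' _ _
  rw [hΔsym] at k1
  -- combine
  have hdiff : g2 - g1 = 2 • u (s + 1) - u s := by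
    rw [hg2, hg1]
    simp only [Nat.add_sub_cancel, show s + 2 - 1 = s + 1 from rfl]
    rw [Finset.sum_Icc_succ_top (by omega : 1 ≤ s + 1)]
    ext i
    simp [two_smul]
    ring
  have hsum : Δ ^ 2 / (2 * ε) + Δ ^ 2 / (2 * ε) ≤
      dotn (w (s + 2) - w (s + 1)) (g2 - g1) := by
    have e1 : dotn (w (s + 2) - w (s + 1)) (g2 - g1)
        = (dotn (w (s + 2)) g2 - dotn (w (s + 1)) g2)
          + (dotn (w (s + 1)) g1 - dotn (w (s + 2)) g1) := by
      unfold dotn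
      rw [← Finset.sum_sub_distrib, ← Finset.sum_sub_distrib, ← Finset.sum_add_distrib]
      apply Finset.sum_congr rfl; intro i _
      simp only [Pi.sub_apply]; ring
    rw [e1]
    linarith
  have hdot : dotn (w (s + 2) - w (s + 1)) (g2 - g1) ≤ Δ * (3 * B) := by
    have h1 := hoelder' (w (s + 2) - w (s + 1)) (g2 - g1)
    rw [← hΔ] at h1
    have h2 : linf (g2 - g1) ≤ 3 * B := by
      rw [hdiff]
      unfold linf
      apply Finset.sup'_le
      intro i _
      have hi1 : |u (s + 1) i| ≤ B := by
        refine le_trans ?_ hB1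
        unfold linf
        exact Finset.le_sup' (fun j => |u (s + 1) j|) (Finset.mem_univ i)
      have hi2 : |u s i| ≤ B := by
        rcases Nat.eq_zero_or_pos s with rfl | hs
        · rw [hu0]; simpa using hB0
        · refine le_trans ?_ (hB s (by omega) (by omega))
          unfold linf
          exact Finset.le_sup' (fun j => |u s j|) (Finset.mem_univ i)
      have : |(2 • u (s + 1) - u s) i| ≤ 2 * |u (s + 1) i| + |u s i| := by
        simp only [Pi.sub_apply, Pi.smul_apply, smul_eq_mul, nsmul_eq_mul]
        calc |2 * u (s + 1) i - u s i| ≤ |2 * u (s + 1) i| + |u s i| := abs_sub _ _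
          _ = 2 * |u (s + 1) i| + |u s i| := by rw [abs_mul]; norm_num
      linarith
    calc dotn (w (s + 2) - w (s + 1)) (g2 - g1) ≤ Δ * linf (g2 - g1) := h1
      _ ≤ Δ * (3 * B) := mul_le_mul_of_nonneg_left h2 hΔ0
  -- Δ²/ε ≤ 3BΔ
  have hfin : Δ ^ 2 / ε ≤ 3 * B * Δ := by
    have : Δ ^ 2 / (2 * ε) + Δ ^ 2 / (2 * ε) = Δ ^ 2 / ε := by field_simp; ring
    rw [this] at hsum
    linarith [le_trans hsum hdot]
  have hΔle : Δ ≤ 3 * ε * B := by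
    rcases eq_or_lt_of_le hΔ0 with h0 | hpos
    · nlinarith
    · have : Δ ^ 2 = Δ * Δ := sq Δ
      have h1 : Δ * Δ ≤ 3 * B * Δ * ε := by
        have := (div_le_iff₀ hε).mp hfin
        nlinarith
      nlinarith
  exact le_min hle2 hΔle
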